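/- Let a, b ≥ 0 and x ≥ 0. Then ∑_{k=0}^∞ (a x)^k / Γ(k/2 + 1) = e^{a²x²}(1 + Erf(a x)) ≤ 2 e^{a²x²}, where Erf is the error function. In particular, ∑_{k=0}^∞ c^k/Γ(k/2+1) ≤ 2 e^{c²} for c ≥ 0. -/

import Mathlib

/-!
Write `E x = ∑ₖ xᵏ / Γ(k/2 + 1)`. Since `Γ(s + 1) = s Γ(s)`, the termwise derivative of the
term of index `k + 2` is `2x` times the term of index `k`, so `E' = 2/√π + 2x E` with `E 0 = 1`.
Hence `e^{-x²} E x - erf x` has zero derivative and is identically `1`. The bound follows from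
`erf ≤ 1`, which holds because `∫₀^∞ e^{-t²} dt = √π/2`. Convergence comes from comparing the
terms with `x²ⁿ / n!`, using `Γ(n + 3/2) ≥ Γ(3/2) n!` for the odd ones.
-/

open MeasureTheory intervalIntegral

/-- The error function `Erf(x) = (2/√π) ∫_0^x e^{−t²} dt`. -/
noncomputable def erf (x : ℝ) : ℝ :=
  (2 / Real.sqrt Real.pi) * ∫ t in (0 : ℝ)..x, Real.exp (-t ^ 2)

open Real
open scoped Nat

theorem Gamma_add_one_mul_factorial_le (n : ℕ) {s : ℝ} (hs : 0 ≤ s) :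
    Gamma (s + 1) * n ! ≤ Gamma (n + s + 1) := by
  induction n with
  | zero => simp
  | succ n ih =>
    have hpos : 0 < (n : ℝ) + s + 1 := by positivity
    calc Gamma (s + 1) * (n + 1) ! = (n + 1) * (Gamma (s + 1) * n !) := by
          push_cast [Nat.factorial_succ]; ring
      _ ≤ (n + s + 1) * Gamma (n + s + 1) := by gcongr; linarith
      _ = Gamma ((n + 1 : ℕ) + s + 1) := by
          rw [← Gamma_add_one hpos.ne']; push_cast; ring_nf

theorem summable_pow_div_Gamma_half_add_one (x : ℝ) :
    Summable fun k : ℕ => x ^ k / Gamma ((k : ℝ) / 2 + 1) := by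
  refine .even_add_odd ?_ ?_
  · refine (summable_pow_div_factorial (x ^ 2)).congr fun n => ?_
    rw [← pow_mul, ← Gamma_nat_eq_factorial]
    push_cast
    ring_nf
  · refine .of_norm_bounded
      ((summable_pow_div_factorial (x ^ 2)).mul_left (|x| / Gamma (1 / 2 + 1))) fun n => ?_
    have hk : ((2 * n + 1 : ℕ) : ℝ) / 2 + 1 = n + 1 / 2 + 1 := by push_cast; ring
    have hΓ : 0 < Gamma (n + 1 / 2 + 1) := Gamma_pos_of_pos (by positivity)
    rw [hk, norm_div, norm_pow, norm_of_nonneg hΓ.le,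
      pow_succ, pow_mul, Real.norm_eq_abs, sq_abs, div_mul_div_comm, mul_comm |x|]
    gcongr
    exact Gamma_add_one_mul_factorial_le n (by norm_num : (0 : ℝ) ≤ 1 / 2)

/-- The Mittag-Leffler function `E_{1/2}`. -/
noncomputable def mittagLefflerHalf (x : ℝ) : ℝ :=
  ∑' k : ℕ, x ^ k / Gamma ((k : ℝ) / 2 + 1)

theorem mittagLefflerHalf_zero : mittagLefflerHalf 0 = 1 := by
  rw [mittagLefflerHalf, tsum_eq_single 0 fun k hk => by simp [hk]]
  simp

theorem nat_add_two_mul_pow_div_Gamma (k : ℕ) (y : ℝ) :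
    ((k + 2 : ℕ) : ℝ) * y ^ (k + 2 - 1) / Gamma (((k + 2 : ℕ) : ℝ) / 2 + 1)
      = 2 * y * (y ^ k / Gamma ((k : ℝ) / 2 + 1)) := by
  have hΓ : Gamma (((k + 2 : ℕ) : ℝ) / 2 + 1)
      = ((k : ℝ) / 2 + 1) * Gamma ((k : ℝ) / 2 + 1) := by
    rw [← Gamma_add_one (by positivity)]; push_cast; ring_nf
  have : 0 < Gamma ((k : ℝ) / 2 + 1) := Gamma_pos_of_pos (by positivity)
  rw [hΓ, Nat.add_sub_assoc one_le_two]
  field_simp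
  push_cast
  ring

theorem summable_nat_mul_pow_sub_one_div_Gamma (y : ℝ) :
    Summable fun k : ℕ => k * y ^ (k - 1) / Gamma ((k : ℝ) / 2 + 1) := by
  rw [← summable_nat_add_iff 2]
  simpa only [nat_add_two_mul_pow_div_Gamma]
    using (summable_pow_div_Gamma_half_add_one y).mul_left (2 * y)

theorem tsum_nat_mul_pow_sub_one_div_Gamma (y : ℝ) :
    ∑' k : ℕ, k * y ^ (k - 1) / Gamma ((k : ℝ) / 2 + 1)
      = 2 / √π + 2 * y * mittagLefflerHalf y := by
  rw [← (summable_nat_mul_pow_sub_one_div_Gamma y).sum_add_tsum_nat_add 2]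
  simp only [nat_add_two_mul_pow_div_Gamma, tsum_mul_left]
  have hΓ : Gamma (3 / 2) = √π / 2 := by
    rw [show (3 / 2 : ℝ) = 1 / 2 + 1 by norm_num, Gamma_add_one (by norm_num), Gamma_one_half_eq]
    ring
  norm_num [Finset.sum_range_succ, hΓ, mittagLefflerHalf]

theorem hasDerivAt_mittagLefflerHalf (x : ℝ) :
    HasDerivAt mittagLefflerHalf (2 / √π + 2 * x * mittagLefflerHalf x) x := by
  let R := |x| + 1
  have hbound (k : ℕ) (y : ℝ) (hy : y ∈ Metric.ball 0 R) :
      ‖k * y ^ (k - 1) / Gamma ((k : ℝ) / 2 + 1)‖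
        ≤ k * R ^ (k - 1) / Gamma ((k : ℝ) / 2 + 1) := by
    have hΓ : 0 < Gamma ((k : ℝ) / 2 + 1) := Gamma_pos_of_pos (by positivity)
    rw [mem_ball_zero_iff] at hy
    rw [norm_div, norm_mul, norm_pow, norm_of_nonneg hΓ.le, Real.norm_natCast]
    gcongr
  have hx : x ∈ Metric.ball 0 R := by simp [R]
  rw [← tsum_nat_mul_pow_sub_one_div_Gamma]
  exact hasDerivAt_tsum_of_isPreconnected (summable_nat_mul_pow_sub_one_div_Gamma R)
    Metric.isOpen_ball (convex_ball 0 R).isPreconnected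
    (fun k y _ => (hasDerivAt_pow k y).div_const _) hbound hx
    (summable_pow_div_Gamma_half_add_one x) hx

theorem hasDerivAt_erf (x : ℝ) : HasDerivAt erf (2 / √π * exp (-x ^ 2)) x :=
  ((continuous_exp.comp (continuous_pow 2).neg).integral_hasStrictDerivAt 0 x).hasDerivAt
    |>.const_mul _

theorem erf_zero : erf 0 = 0 := by simp [erf]

theorem integral_exp_neg_sq_le (x : ℝ) : ∫ t in (0 : ℝ)..x, exp (-t ^ 2) ≤ √π / 2 := by
  rcases le_total 0 x with hx | hx
  · have hint : IntegrableOn (fun t : ℝ => exp (-t ^ 2)) (Set.Ioi 0) := by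
      simpa using (integrable_exp_neg_mul_sq one_pos).integrableOn
    calc ∫ t in (0 : ℝ)..x, exp (-t ^ 2) ≤ ∫ t in Set.Ioi 0, exp (-t ^ 2) := by
          rw [integral_of_le hx]
          exact setIntegral_mono_set hint (.of_forall fun t => (exp_pos _).le)
            (.of_forall Set.Ioc_subset_Ioi_self)
      _ = √π / 2 := by simpa using integral_gaussian_Ioi 1
  · rw [integral_symm]
    have : 0 ≤ ∫ t in x..0, exp (-t ^ 2) := integral_nonneg hx fun t _ => (exp_pos _).le
    have : 0 ≤ √π / 2 := by positivity
    linarith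

theorem erf_le_one (x : ℝ) : erf x ≤ 1 := by
  have hπ : 0 < √π := sqrt_pos.2 pi_pos
  calc erf x ≤ 2 / √π * (√π / 2) := by
        unfold erf; gcongr; exact integral_exp_neg_sq_le x
    _ = 1 := by field_simp

theorem mittagLefflerHalf_eq (x : ℝ) : mittagLefflerHalf x = exp (x ^ 2) * (1 + erf x) := by
  set g : ℝ → ℝ := fun z => exp (-z ^ 2) * mittagLefflerHalf z - erf z
  have hg (z : ℝ) : HasDerivAt g 0 z := by
    have hexp : HasDerivAt (fun z : ℝ => exp (-z ^ 2)) (exp (-z ^ 2) * -(2 * z)) z := by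
      simpa using ((hasDerivAt_pow 2 z).neg).exp
    have h := (hexp.mul (hasDerivAt_mittagLefflerHalf z)).sub (hasDerivAt_erf z)
    rwa [show exp (-z ^ 2) * -(2 * z) * mittagLefflerHalf z
        + exp (-z ^ 2) * (2 / √π + 2 * z * mittagLefflerHalf z) - 2 / √π * exp (-z ^ 2) = 0 by
      ring] at h
  have hconst :=
    is_const_of_deriv_eq_zero (fun z => (hg z).differentiableAt) (fun z => (hg z).deriv) x 0
  simp only [ne_eq, OfNat.ofNat_ne_zero, not_false_eq_true, zero_pow, neg_zero, exp_zero,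
    mittagLefflerHalf_zero, mul_one, erf_zero, sub_zero, g] at hconst
  rw [← sub_eq_iff_eq_add.1 hconst, ← mul_assoc, ← exp_add]
  simp

theorem mittagLefflerHalf_le (x : ℝ) : mittagLefflerHalf x ≤ 2 * exp (x ^ 2) := by
  rw [mittagLefflerHalf_eq, mul_comm 2]
  gcongr
  linarith [erf_le_one x]

theorem mittag_leffler_erf_general (a x : ℝ) :
    (∑' k : ℕ, (a * x) ^ k / Real.Gamma ((k : ℝ) / 2 + 1)
        = Real.exp (a ^ 2 * x ^ 2) * (1 + erf (a * x))) ∧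
      (∑' k : ℕ, (a * x) ^ k / Real.Gamma ((k : ℝ) / 2 + 1)
          ≤ 2 * Real.exp (a ^ 2 * x ^ 2)) ∧
      (∀ c : ℝ, 0 ≤ c →
        ∑' k : ℕ, c ^ k / Real.Gamma ((k : ℝ) / 2 + 1) ≤ 2 * Real.exp (c ^ 2)) := by
  rw [← mul_pow]
  exact ⟨mittagLefflerHalf_eq (a * x), mittagLefflerHalf_le (a * x),
    fun c _ => mittagLefflerHalf_le c⟩

/-- Mittag-Leffler-type summation:
`∑_{k=0}^∞ (ax)^k/Γ(k/2+1) = e^{a²x²}(1 + Erf(ax)) ≤ 2e^{a²x²}`, and in particular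
`∑_k c^k/Γ(k/2+1) ≤ 2 e^{c²}` for `c ≥ 0`. -/
theorem mittag_leffler_erf (a x : ℝ) (ha : 0 ≤ a) (hx : 0 ≤ x) :
    (∑' k : ℕ, (a * x) ^ k / Real.Gamma ((k : ℝ) / 2 + 1)
        = Real.exp (a ^ 2 * x ^ 2) * (1 + erf (a * x))) ∧
      (∑' k : ℕ, (a * x) ^ k / Real.Gamma ((k : ℝ) / 2 + 1)
          ≤ 2 * Real.exp (a ^ 2 * x ^ 2)) ∧
      (∀ c : ℝ, 0 ≤ c →
        ∑' k : ℕ, c ^ k / Real.Gamma ((k : ℝ) / 2 + 1) ≤ 2 * Real.exp (c ^ 2)) :=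
  mittag_leffler_erf_general a x
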